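/- Let e_{π/2} denote the Born-rule empirical model of the state |diag;π/2,π/4⟩ = (|0⟩⊗|0⟩ + e^{iπ/4}|1⟩⊗|1⟩)/√2 in the two-party Bell scenario in which both Alice's and Bob's two measurements are given by the Pauli bases B_x = {(|0⟩+|1⟩)/√2, (|0⟩−|1⟩)/√2} and B_y = {(|0⟩+i|1⟩)/√2, (|0⟩−i|1⟩)/√2}. Then CF(e_{π/2}) = √2 − 1. -/

import Mathlib

/-!
The Born model of `|diag;π/2,π/4⟩` in the Pauli scenario is the PR box with visibility `1/√2`:
in every context the outcome pairs winning the CHSH game have probability `(2 + √2)/8`.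
Its CHSH score, the winning probability summed over the four contexts, is therefore `2 + √2`,
while any model scores at most `4` and a noncontextual one at most `3` (the CHSH inequality).
A noncontextual fraction `λ` thus satisfies `2 + √2 ≤ 3λ + 4(1 - λ)`, i.e. `λ ≤ 2 - √2`.
Equality is attained because the box of visibility `v` mixes, with weights `2 - 2v` and
`2v - 1`, the box of visibility `1/2` (the uniform mixture of the eight deterministic
assignments winning three rounds) and the PR box itself.
-/

open scoped ComplexConjugate

/-- Standard Hermitian inner product on `ℂ²` (conjugate-linear in the first slot). -/
noncomputable def ip2 (u v : Fin 2 → ℂ) : ℂ := ∑ i, conj (u i) * v i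

/-- Tensor product `u ⊗ v ∈ ℂ² ⊗ ℂ²`, as a function on `Fin 2 × Fin 2`. -/
noncomputable def tens (u v : Fin 2 → ℂ) : Fin 2 × Fin 2 → ℂ := fun p => u p.1 * v p.2

/-- Standard Hermitian inner product on `ℂ² ⊗ ℂ²` (conjugate-linear in the
first slot). -/
noncomputable def ip4 (u v : Fin 2 × Fin 2 → ℂ) : ℂ := ∑ p, conj (u p) * v p

/-- Bloch vector `|θ,φ⟩ = cos(θ/2)|0⟩ + e^{iφ} sin(θ/2)|1⟩`. -/
noncomputable def bloch (θ φ : ℝ) : Fin 2 → ℂ :=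
  ![(Real.cos (θ / 2) : ℂ), Complex.exp (φ * Complex.I) * (Real.sin (θ / 2) : ℂ)]

/-- The orthonormal basis `B(θ,φ) = {|θ,φ⟩, |π−θ,π+φ⟩}` of `ℂ²`, indexed by the
outcome. -/
noncomputable def Bbasis (θ φ : ℝ) : Fin 2 → Fin 2 → ℂ :=
  ![bloch θ φ, bloch (Real.pi - θ) (Real.pi + φ)]

/-- The Born-rule empirical model of the state `ψ ∈ ℂ² ⊗ ℂ²` when Alice's
measurement `a_{i+1}` is given by the orthonormal basis `A i` and Bob's
measurement `b_{j+1}` by the orthonormal basis `B j`: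
`e_{{a_i,b_j}}(s,t) = |⟨α_{i,s} ⊗ β_{j,t}, ψ⟩|²`. -/
noncomputable def born (A B : Fin 2 → Fin 2 → Fin 2 → ℂ) (ψ : Fin 2 × Fin 2 → ℂ) :
    Fin 2 → Fin 2 → Fin 2 → Fin 2 → ℝ := fun i j s t =>
  ‖ip4 (tens (A i s) (B j t)) ψ‖ ^ 2

/-- An empirical model on the two-party Bell scenario: for each context
`{a_{i+1}, b_{j+1}}` a probability distribution on joint outcomes `(s, t)`. -/
def IsModel (e : Fin 2 → Fin 2 → Fin 2 → Fin 2 → ℝ) : Prop :=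
  (∀ i j s t, 0 ≤ e i j s t) ∧ ∀ i j, (∑ s, ∑ t, e i j s t) = 1

/-- Noncontextuality: a global probability distribution on assignments
`g : {a₁,a₂,b₁,b₂} → {0,1}` (with `X` encoded as `Fin 2 ⊕ Fin 2`, `inl i = a_{i+1}`,
`inr j = b_{j+1}`) marginalises to every context. -/
def Noncontextual (e : Fin 2 → Fin 2 → Fin 2 → Fin 2 → ℝ) : Prop :=
  ∃ d : (Fin 2 ⊕ Fin 2 → Fin 2) → ℝ,
    (∀ g, 0 ≤ d g) ∧ (∑ g, d g) = 1 ∧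
    ∀ i j s t, (∑ g ∈ Finset.univ.filter
        (fun g : Fin 2 ⊕ Fin 2 → Fin 2 => g (.inl i) = s ∧ g (.inr j) = t), d g)
      = e i j s t

/-- The noncontextual fraction of an empirical model. -/
noncomputable def NCF (e : Fin 2 → Fin 2 → Fin 2 → Fin 2 → ℝ) : ℝ :=
  sSup {l : ℝ | 0 ≤ l ∧ l ≤ 1 ∧
    ∃ eNC e' : Fin 2 → Fin 2 → Fin 2 → Fin 2 → ℝ,
      IsModel eNC ∧ Noncontextual eNC ∧ IsModel e' ∧
      ∀ i j s t, e i j s t = l * eNC i j s t + (1 - l) * e' i j s t}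

/-- The contextual fraction of an empirical model. -/
noncomputable def CF (e : Fin 2 → Fin 2 → Fin 2 → Fin 2 → ℝ) : ℝ := 1 - NCF e

/-- Diagonal two-qubit state `|diag;θ,φ⟩ = cos(θ/2)|00⟩ + e^{iφ} sin(θ/2)|11⟩`. -/
noncomputable def diagState (θ φ : ℝ) : Fin 2 × Fin 2 → ℂ := fun p =>
  if p = (0, 0) then (Real.cos (θ / 2) : ℂ)
  else if p = (1, 1) then Complex.exp (φ * Complex.I) * (Real.sin (θ / 2) : ℂ)
  else 0

/-- The Pauli `x` basis `{(|0⟩+|1⟩)/√2, (|0⟩−|1⟩)/√2}`. -/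
noncomputable def Bx : Fin 2 → Fin 2 → ℂ :=
  ![![((Real.sqrt 2)⁻¹ : ℂ), ((Real.sqrt 2)⁻¹ : ℂ)],
    ![((Real.sqrt 2)⁻¹ : ℂ), -((Real.sqrt 2)⁻¹ : ℂ)]]

/-- The Pauli `y` basis `{(|0⟩+i|1⟩)/√2, (|0⟩−i|1⟩)/√2}`. -/
noncomputable def By : Fin 2 → Fin 2 → ℂ :=
  ![![((Real.sqrt 2)⁻¹ : ℂ), Complex.I * ((Real.sqrt 2)⁻¹ : ℂ)],
    ![((Real.sqrt 2)⁻¹ : ℂ), -(Complex.I * ((Real.sqrt 2)⁻¹ : ℂ))]]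

/-- Alice's (= Bob's) measurements in the scenario `S(B_x, B_y)`. -/
noncomputable def pauliMeas : Fin 2 → Fin 2 → Fin 2 → ℂ := ![Bx, By]

open Finset

def chshWin (i j s t : Fin 2) : Prop := s = t ↔ ¬(i = 1 ∧ j = 1)

instance (i j s t : Fin 2) : Decidable (chshWin i j s t) := by unfold chshWin; infer_instance

noncomputable def chshScore : (Fin 2 → Fin 2 → Fin 2 → Fin 2 → ℝ) →ₗ[ℝ] ℝ where
  toFun e := ∑ i, ∑ j, ∑ s, ∑ t, if chshWin i j s t then e i j s t else 0
  map_add' e e' := by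
    simp only [← sum_add_distrib, Pi.add_apply, ite_add_ite, add_zero]
  map_smul' c e := by
    simp only [mul_sum, Pi.smul_apply, smul_eq_mul, mul_ite, mul_zero, RingHom.id_apply]

lemma chshScore_apply (e : Fin 2 → Fin 2 → Fin 2 → Fin 2 → ℝ) :
    chshScore e = ∑ i, ∑ j, ∑ s, ∑ t, if chshWin i j s t then e i j s t else 0 := rfl

lemma chshScore_le_four_of_isModel {e : Fin 2 → Fin 2 → Fin 2 → Fin 2 → ℝ} (he : IsModel e) :
    chshScore e ≤ 4 := by
  have hcontext (i j : Fin 2) :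
      (∑ s, ∑ t, if chshWin i j s t then e i j s t else 0) ≤ 1 :=
    calc (∑ s, ∑ t, if chshWin i j s t then e i j s t else 0)
        ≤ ∑ s, ∑ t, e i j s t := by
          gcongr with s _ t _
          split_ifs
          exacts [le_rfl, he.1 i j s t]
      _ = 1 := he.2 i j
  calc chshScore e ≤ ∑ _i : Fin 2, ∑ _j : Fin 2, (1 : ℝ) := by
        rw [chshScore_apply]; gcongr with i _ j _; exact hcontext i j
    _ = 4 := by norm_num

noncomputable def detModel (g : Fin 2 ⊕ Fin 2 → Fin 2) : Fin 2 → Fin 2 → Fin 2 → Fin 2 → ℝ :=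
  fun i j s t => if g (.inl i) = s ∧ g (.inr j) = t then 1 else 0

lemma Noncontextual.exists_eq_sum_detModel {e : Fin 2 → Fin 2 → Fin 2 → Fin 2 → ℝ}
    (he : Noncontextual e) :
    ∃ d : (Fin 2 ⊕ Fin 2 → Fin 2) → ℝ, (∀ g, 0 ≤ d g) ∧ ∑ g, d g = 1 ∧
      e = ∑ g, d g • detModel g := by
  obtain ⟨d, hd0, hd1, hmarg⟩ := he
  refine ⟨d, hd0, hd1, ?_⟩
  ext i j s t
  simp only [← hmarg, sum_filter, Finset.sum_apply, Pi.smul_apply, smul_eq_mul, detModel,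
    mul_ite, mul_one, mul_zero]

lemma chshScore_detModel_le_three (g : Fin 2 ⊕ Fin 2 → Fin 2) : chshScore (detModel g) ≤ 3 := by
  have hscore : chshScore (detModel g)
      = ((∑ i, ∑ j, if chshWin i j (g (.inl i)) (g (.inr j)) then 1 else 0 : ℕ) : ℝ) := by
    push_cast
    rw [chshScore_apply]
    refine sum_congr rfl fun i _ => sum_congr rfl fun j _ => ?_
    have hpoint (s t : Fin 2) : (if chshWin i j s t then detModel g i j s t else 0)
        = if g (.inl i) = s then if g (.inr j) = t then
            (if chshWin i j s t then 1 else 0) else 0 else 0 := by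
      unfold detModel; split_ifs <;> simp_all
    simp [hpoint]
  have hcount : ∀ g : Fin 2 ⊕ Fin 2 → Fin 2,
      (∑ i, ∑ j, if chshWin i j (g (.inl i)) (g (.inr j)) then 1 else 0 : ℕ) ≤ 3 := by
    decide
  rw [hscore]
  exact_mod_cast hcount g

/-- The CHSH inequality. -/
lemma chshScore_le_three_of_noncontextual {e : Fin 2 → Fin 2 → Fin 2 → Fin 2 → ℝ}
    (he : Noncontextual e) : chshScore e ≤ 3 := by
  obtain ⟨d, hd0, hd1, rfl⟩ := he.exists_eq_sum_detModel
  calc chshScore (∑ g, d g • detModel g) = ∑ g, d g * chshScore (detModel g) := by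
        simp only [map_sum, map_smul, smul_eq_mul]
    _ ≤ ∑ g, d g * 3 := by gcongr with g; exacts [hd0 g, chshScore_detModel_le_three g]
    _ = 3 := by rw [← sum_mul, hd1, one_mul]

/-- The PR box (`v = 1`) mixed with white noise at visibility `v`. -/
noncomputable def noisyPRBox (v : ℝ) : Fin 2 → Fin 2 → Fin 2 → Fin 2 → ℝ :=
  fun i j s t => if chshWin i j s t then (1 + v) / 4 else (1 - v) / 4

lemma isModel_noisyPRBox {v : ℝ} (hv₀ : -1 ≤ v) (hv₁ : v ≤ 1) : IsModel (noisyPRBox v) := by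
  refine ⟨fun i j s t => ?_, fun i j => ?_⟩
  · unfold noisyPRBox; split_ifs <;> linarith
  · fin_cases i <;> fin_cases j <;> simp [noisyPRBox, chshWin] <;> ring

lemma noisyPRBox_affine (a b l : ℝ) (i j s t : Fin 2) :
    noisyPRBox (l * a + (1 - l) * b) i j s t
      = l * noisyPRBox a i j s t + (1 - l) * noisyPRBox b i j s t := by
  unfold noisyPRBox; split_ifs <;> ring

lemma chshScore_noisyPRBox (v : ℝ) : chshScore (noisyPRBox v) = 2 * (1 + v) := by
  simp [chshScore_apply, noisyPRBox, chshWin]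
  ring

def chshNearWins : Finset (Fin 2 ⊕ Fin 2 → Fin 2) :=
  {g | (∑ i, ∑ j, if chshWin i j (g (.inl i)) (g (.inr j)) then 1 else 0 : ℕ) = 3}

/-- Witnessed by the uniform distribution on the eight assignments in `chshNearWins`. -/
lemma noncontextual_noisyPRBox_half : Noncontextual (noisyPRBox (1 / 2)) := by
  have hcard : #chshNearWins = 8 := by decide
  have hmarg (i j s t : Fin 2) :
      #{g | (g (.inl i) = s ∧ g (.inr j) = t) ∧ g ∈ chshNearWins}
        = if chshWin i j s t then 3 else 1 := by
    revert i j s t; decide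
  refine ⟨fun g => if g ∈ chshNearWins then 1 / 8 else 0, fun g => by positivity, ?_,
    fun i j s t => ?_⟩
  · simp [sum_ite_mem, hcard]
  · rw [← sum_filter, sum_const, nsmul_eq_mul, filter_filter, hmarg, noisyPRBox]
    split_ifs <;> norm_num

def AdmitsNCFraction (e : Fin 2 → Fin 2 → Fin 2 → Fin 2 → ℝ) (l : ℝ) : Prop :=
  0 ≤ l ∧ l ≤ 1 ∧
    ∃ eNC e' : Fin 2 → Fin 2 → Fin 2 → Fin 2 → ℝ,
      IsModel eNC ∧ Noncontextual eNC ∧ IsModel e' ∧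
      ∀ i j s t, e i j s t = l * eNC i j s t + (1 - l) * e' i j s t

lemma NCF_eq_sSup (e : Fin 2 → Fin 2 → Fin 2 → Fin 2 → ℝ) :
    NCF e = sSup {l | AdmitsNCFraction e l} := rfl

/-- The noncontextual part scores at most `3` and the rest at most `4`. -/
lemma AdmitsNCFraction.le_four_sub_chshScore {e : Fin 2 → Fin 2 → Fin 2 → Fin 2 → ℝ} {l : ℝ}
    (h : AdmitsNCFraction e l) : l ≤ 4 - chshScore e := by
  obtain ⟨hl₀, hl₁, eNC, e', -, hNC, he', hdecomp⟩ := h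
  have he : e = l • eNC + (1 - l) • e' := by ext i j s t; exact hdecomp i j s t
  have hscore : chshScore e = l * chshScore eNC + (1 - l) * chshScore e' := by
    rw [he, map_add, map_smul, map_smul, smul_eq_mul, smul_eq_mul]
  have := mul_le_mul_of_nonneg_left (chshScore_le_three_of_noncontextual hNC) hl₀
  have := mul_le_mul_of_nonneg_left (chshScore_le_four_of_isModel he') (sub_nonneg.2 hl₁)
  linarith

lemma NCF_noisyPRBox {v : ℝ} (hv₀ : 1 / 2 ≤ v) (hv₁ : v ≤ 1) :
    NCF (noisyPRBox v) = 2 - 2 * v := by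
  rw [NCF_eq_sSup]
  refine IsGreatest.csSup_eq ⟨?_, fun l hl => ?_⟩
  · refine ⟨by linarith, by linarith, noisyPRBox (1 / 2), noisyPRBox 1,
      isModel_noisyPRBox (by norm_num) (by norm_num), noncontextual_noisyPRBox_half,
      isModel_noisyPRBox (by norm_num) le_rfl, fun i j s t => ?_⟩
    rw [← noisyPRBox_affine]
    congr 1
    ring
  · have := hl.le_four_sub_chshScore
    rw [chshScore_noisyPRBox] at this
    linarith

open Complex in
lemma ip4_tens_diagState (u w : Fin 2 → ℂ) (θ φ : ℝ) :
    ip4 (tens u w) (diagState θ φ)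
      = conj (u 0 * w 0) * Real.cos (θ / 2)
        + conj (u 1 * w 1) * (exp (φ * I) * Real.sin (θ / 2)) := by
  simp [ip4, tens, diagState, Fintype.sum_prod_type, Fin.sum_univ_two]

open Complex in
lemma born_pauliMeas_diagState :
    born pauliMeas pauliMeas (diagState (Real.pi / 2) (Real.pi / 4))
      = noisyPRBox (Real.sqrt 2 / 2) := by
  have hsqrt : Real.sqrt 2 ^ 2 = 2 := Real.sq_sqrt zero_le_two
  have hphase : exp ((Real.pi / 4 : ℝ) * I) * (Real.sin (Real.pi / 4) : ℂ) = (1 + I) / 2 := by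
    rw [exp_mul_I, ← ofReal_cos, ← ofReal_sin, Real.cos_pi_div_four, Real.sin_pi_div_four]
    push_cast
    linear_combination (1 + I) / 4 * (by exact_mod_cast hsqrt : (Real.sqrt 2 : ℂ) ^ 2 = 2)
  have hsqrt4 : Real.sqrt 2 ^ 4 = 4 := by
    linear_combination (Real.sqrt 2 ^ 2 + 2) * hsqrt
  have hsqrt5 : Real.sqrt 2 ^ 5 = 4 * Real.sqrt 2 := by
    linear_combination (Real.sqrt 2 ^ 3 + 2 * Real.sqrt 2) * hsqrt
  have hsqrt6 : Real.sqrt 2 ^ 6 = 8 := by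
    linear_combination (Real.sqrt 2 ^ 4 + 2 * Real.sqrt 2 ^ 2 + 4) * hsqrt
  ext i j s t
  rw [born, ip4_tens_diagState, show Real.pi / 2 / 2 = Real.pi / 4 by ring, hphase,
    Real.cos_pi_div_four]
  fin_cases i <;> fin_cases j <;> fin_cases s <;> fin_cases t <;>
  · simp [pauliMeas, Bx, By, noisyPRBox, chshWin, Complex.sq_norm, Complex.normSq_apply]
    ring_nf
    simp only [hsqrt4, hsqrt5, hsqrt6]
    ring

/-- the contextual fraction of `|diag;π/2,π/4⟩` with respect to
the scenario `S(B_x, B_y)` equals `√2 − 1`. -/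
theorem diag_half_pi_contextual_fraction :
    CF (born pauliMeas pauliMeas (diagState (Real.pi / 2) (Real.pi / 4)))
      = Real.sqrt 2 - 1 := by
  have hv₀ : 1 / 2 ≤ Real.sqrt 2 / 2 := by linarith [Real.one_lt_sqrt_two]
  have hv₁ : Real.sqrt 2 / 2 ≤ 1 := by linarith [Real.sqrt_two_lt_three_halves]
  rw [CF, born_pauliMeas_diagState, NCF_noisyPRBox hv₀ hv₁]
  ring
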